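/- arXiv:cs/0402042 — 3 statements merged into one kernel-verified Lean document; each statement's English description precedes it below -/
import Mathlib

section
/- In an interpreted system I with at least three agents, if no two distinct agents both perform action a in any run (i.e., I validates ¬(θ(i,a) ∧ θ(j,a)) for all i ≠ j), and action a performed by agent i is totally anonymous with respect to agent j, then a performed by i is also minimally anonymous with respect to j. -/
/-- With at least three agents, if no two distinct agents both perform
action `a` and the action performed by `i` is totally anonymous w.r.t. `j`, then it
is minimally anonymous w.r.t. `j`. -/
theorem stmt0 {W Agent : Type} [Fintype Agent]
    (R : Agent → W → W → Prop) (hequiv : ∀ j, Equivalence (R j))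
    (θ : Agent → W → Prop) (i j : Agent)
    (hcard : 3 ≤ Fintype.card Agent)
    (hdisj : ∀ i' j', i' ≠ j' → ∀ w, ¬ (θ i' w ∧ θ j' w))
    (htotal : ∀ w, θ i w → ∀ i', i' ≠ j → ¬ (∀ w', R j w w' → ¬ θ i' w')) :
    ∀ w, ¬ (∀ w', R j w w' → θ i w') := by
  intro w hK
  have hθw : θ i w := hK w ((hequiv j).refl w)
  classical
  have hex : ∃ k : Agent, k ∉ ({i, j} : Finset Agent) := by
    by_contra h
    push_neg at h
    have : (Finset.univ : Finset Agent) ⊆ {i, j} := fun k _ => h k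
    have hle := Finset.card_le_card this
    have h2 : ({i, j} : Finset Agent).card ≤ 2 :=
      (Finset.card_insert_le _ _).trans (by simp)
    rw [Finset.card_univ] at hle
    omega
  obtain ⟨k, hk⟩ := hex
  simp [Finset.mem_insert] at hk
  have h1 := htotal w hθw k hk.2
  apply h1
  intro w' hR hθk
  exact hdisj i k (fun h => hk.1 h.symm) w' ⟨hK w' hR, hθk⟩
end

section
/- Let X = {a} and for each point (r,m) let f_{(r,m)}(a) ∈ Y be the agent performing a (with f_{(r,m)}(a) = N, the 'nobody' agent, if no one performs a), and suppose (I,r,m) ⊨ θ(i,a) exactly when f_{(r,m)}(a) = i. Then action a is anonymous up to I_A with respect to o for every agent i ∈ I_A if and only if at every point (r,m) with f_{(r,m)}(a) ∈ I_A, the function f is I_A-value opaque with respect to o at (r,m). -/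
/-- With X = {a} and f_{(r,m)}(a) the agent performing a (N = none if
nobody does), and θ(i,a) holding exactly when f = some i: action a is anonymous up
to I_A w.r.t. o for every i ∈ I_A iff f is I_A-value opaque w.r.t. o at every point
where f's value lies in I_A. -/
theorem stmt16 {W Agent O : Type} (obs : W → O)
    (f : W → Option Agent) (θ : Agent → W → Prop)
    (hθ : ∀ i w, θ i w ↔ f w = some i)
    (IA : Set Agent) :
    (∀ i ∈ IA, ∀ w, θ i w → ∀ i' ∈ IA,
        ¬ (∀ w', obs w' = obs w → ¬ θ i' w')) ↔
    (∀ w, (∃ i ∈ IA, f w = some i) →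
        ∀ z ∈ IA, ∃ w', obs w' = obs w ∧ f w' = some z) := by
  simp only [hθ]
  constructor
  · rintro h w ⟨i, hi, hf⟩ z hz
    have := h i hi w hf z hz
    push_neg at this
    obtain ⟨w', h1, h2⟩ := this
    exact ⟨w', h1, h2⟩
  · rintro h i hi w hf i' hi'
    obtain ⟨w', h1, h2⟩ := h w ⟨i, hi, hf⟩ i' hi'
    push_neg
    exact ⟨w', h1, h2⟩
end

section
/- If action a performed by agent i is strongly probabilistically anonymous up to I_A with respect to j, events θ(i',a) for i' ∈ I_A are pairwise disjoint, i ∈ I_A, |I_A| = k ≥ 2, and Pr_j is a finitely additive probability measure at each point, then a performed by i is beyond suspicion up to I_A and (1/k + ε)-anonymous with respect to j for every ε > 0. -/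
/-- Strong probabilistic anonymity up to I_A (with pairwise disjoint
events θ(i',a), i ∈ I_A, |I_A| = k ≥ 2, and finitely additive probabilities) implies
beyond suspicion up to I_A and (1/k + ε)-anonymity for every ε > 0. -/
theorem stmt19 {W Agent : Type} [DecidableEq Agent]
    (Pr : W → (W → Prop) → ℝ) (θ : Agent → W → Prop)
    (IA : Finset Agent) (i j : Agent) (k : ℕ)
    (hk : IA.card = k) (hk2 : 2 ≤ k) (hi : i ∈ IA)
    (hdisj : ∀ i1 i2, i1 ≠ i2 → ∀ w, ¬ (θ i1 w ∧ θ i2 w))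
    (hbound : ∀ w E, Pr w E ≤ 1)
    (hnn : ∀ w E, 0 ≤ Pr w E)
    (hadd : ∀ w (T : Finset Agent),
        Pr w (fun v => ∃ i' ∈ T, θ i' v) = ∑ i' ∈ T, Pr w (θ i'))
    (hstrong : ∀ w, θ i w → ∀ i' ∈ IA, Pr w (θ i) = Pr w (θ i')) :
    (∀ w, θ i w → ∀ i' ∈ IA, Pr w (θ i) ≤ Pr w (θ i')) ∧
    (∀ ε : ℝ, 0 < ε → ∀ w, θ i w → Pr w (θ i) < 1 / (k : ℝ) + ε) := by
  constructor
  · intro w hw i' hi'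
    exact (hstrong w hw i' hi').le
  · intro ε hε w hw
    have hkpos : (0 : ℝ) < k := by positivity
    have hsum : ∑ i' ∈ IA, Pr w (θ i') ≤ 1 := by
      rw [← hadd]; exact hbound _ _
    have hconst : ∑ i' ∈ IA, Pr w (θ i') = k * Pr w (θ i) := by
      rw [Finset.sum_congr rfl (fun i' hi' => (hstrong w hw i' hi').symm),
        Finset.sum_const, hk, nsmul_eq_mul]
    have : (k : ℝ) * Pr w (θ i) ≤ 1 := hconst ▸ hsum
    have h1 : Pr w (θ i) ≤ 1 / k := by
      rw [le_div_iff₀ hkpos]; linarith [this]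
    linarith
end
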